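/- Let {B_{a|x}} be a measurement assemblage with IR(B) achieved at a full-rank state ρ̃, i.e., SR(ρ̃^{1/2} B ρ̃^{1/2}) = IR(B). Then one may choose the noise assemblage ξ and the LHS assemblage τ attaining the optimal decomposition of SR(ρ̃^{1/2} B ρ̃^{1/2}) so that both have reduced state ρ̃, i.e., Σ_a ξ_{a|x} = Σ_a τ_{a|x} = ρ̃ for all x. -/

import Mathlib

open Matrix Kronecker BigOperators ComplexOrder

noncomputable section

/-- A density matrix: positive semidefinite with unit trace. -/
def IsDensity {d : ℕ} (ρ : Matrix (Fin d) (Fin d) ℂ) : Prop :=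
  ρ.PosSemidef ∧ ρ.trace = 1

/-- A POVM: positive semidefinite effects summing to the identity. -/
def IsPOVM {d nl : ℕ} (G : Fin nl → Matrix (Fin d) (Fin d) ℂ) : Prop :=
  (∀ l, (G l).PosSemidef) ∧ ∑ l, G l = 1

/-- A measurement assemblage: for each setting `x`, a POVM `a ↦ M x a`. -/
def IsMA {d na nx : ℕ} (M : Fin nx → Fin na → Matrix (Fin d) (Fin d) ℂ) : Prop :=
  (∀ x a, (M x a).PosSemidef) ∧ ∀ x, ∑ a, M x a = 1

/-- Joint measurability: `M x a = ∑ λ p(a|x,λ) G λ` for a parent POVM `G`. -/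
def JM {d na nx : ℕ} (M : Fin nx → Fin na → Matrix (Fin d) (Fin d) ℂ) : Prop :=
  ∃ (nl : ℕ) (G : Fin nl → Matrix (Fin d) (Fin d) ℂ)
    (p : Fin nx → Fin na → Fin nl → ℝ),
    IsPOVM G ∧ (∀ x a l, 0 ≤ p x a l) ∧ (∀ x l, ∑ a, p x a l = 1) ∧
    ∀ x a, M x a = ∑ l, (p x a l : ℂ) • G l

/-- A state assemblage: PSD elements with an `x`-independent reduced density matrix. -/
def IsSA {d na nx : ℕ} (σ : Fin nx → Fin na → Matrix (Fin d) (Fin d) ℂ) : Prop :=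
  (∀ x a, (σ x a).PosSemidef) ∧
  ∃ ρ : Matrix (Fin d) (Fin d) ℂ, IsDensity ρ ∧ ∀ x, ∑ a, σ x a = ρ

/-- Local-hidden-state model: `σ x a = ∑ λ q(λ) p(a|x,λ) ρ_λ`. -/
def LHS {d na nx : ℕ} (σ : Fin nx → Fin na → Matrix (Fin d) (Fin d) ℂ) : Prop :=
  ∃ (nl : ℕ) (q : Fin nl → ℝ) (p : Fin nx → Fin na → Fin nl → ℝ)
    (ρ : Fin nl → Matrix (Fin d) (Fin d) ℂ),
    (∀ l, 0 ≤ q l) ∧ (∑ l, q l = 1) ∧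
    (∀ x a l, 0 ≤ p x a l) ∧ (∀ x l, ∑ a, p x a l = 1) ∧
    (∀ l, IsDensity (ρ l)) ∧
    ∀ x a, σ x a = ∑ l, ((q l * p x a l : ℝ) : ℂ) • ρ l

/-- Incompatibility robustness. -/
def IR {d na nx : ℕ} (B : Fin nx → Fin na → Matrix (Fin d) (Fin d) ℂ) : ℝ :=
  sInf {t : ℝ | 0 ≤ t ∧ ∃ N, IsMA N ∧
    JM (fun x a => (((1 + t : ℝ))⁻¹ : ℂ) • (B x a + (t : ℂ) • N x a))}

/-- Steering robustness. -/
def SR {d na nx : ℕ} (σ : Fin nx → Fin na → Matrix (Fin d) (Fin d) ℂ) : ℝ :=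
  sInf {t : ℝ | 0 ≤ t ∧ ∃ ξ, IsSA ξ ∧
    LHS (fun x a => (((1 + t : ℝ))⁻¹ : ℂ) • (σ x a + (t : ℂ) • ξ x a))}

/-- Incompatible weight. -/
def IW {d na nx : ℕ} (B : Fin nx → Fin na → Matrix (Fin d) (Fin d) ℂ) : ℝ :=
  sInf {t : ℝ | 0 ≤ t ∧ t ≤ 1 ∧ ∃ N O, IsMA N ∧ JM O ∧
    ∀ x a, B x a = (t : ℂ) • N x a + ((1 - t : ℝ) : ℂ) • O x a}

/-- Steerable weight. -/
def SW {d na nx : ℕ} (σ : Fin nx → Fin na → Matrix (Fin d) (Fin d) ℂ) : ℝ :=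
  sInf {t : ℝ | 0 ≤ t ∧ t ≤ 1 ∧ ∃ ξ τ, IsSA ξ ∧ LHS τ ∧
    ∀ x a, σ x a = (t : ℂ) • ξ x a + ((1 - t : ℝ) : ℂ) • τ x a}

/-- Positive map on matrices. -/
def PosMap {d : ℕ} (E : Matrix (Fin d) (Fin d) ℂ →ₗ[ℂ] Matrix (Fin d) (Fin d) ℂ) : Prop :=
  ∀ X, X.PosSemidef → (E X).PosSemidef

/-- Trace-nonincreasing on PSD matrices. -/
def TNI {d : ℕ} (E : Matrix (Fin d) (Fin d) ℂ →ₗ[ℂ] Matrix (Fin d) (Fin d) ℂ) : Prop :=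
  ∀ X : Matrix (Fin d) (Fin d) ℂ, X.PosSemidef → (E X).trace.re ≤ X.trace.re

/-- `Ed` is the Hilbert–Schmidt adjoint of `E`. -/
def IsAdjoint {d : ℕ} (E Ed : Matrix (Fin d) (Fin d) ℂ →ₗ[ℂ] Matrix (Fin d) (Fin d) ℂ) : Prop :=
  ∀ X Y, ((E X)ᴴ * Y).trace = (Xᴴ * (Ed Y)).trace

/-- Partial trace over the first tensor factor. -/
def ptraceA {d d' : ℕ} (M : Matrix (Fin d × Fin d') (Fin d × Fin d') ℂ) :
    Matrix (Fin d') (Fin d') ℂ :=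
  Matrix.of fun i j => ∑ k : Fin d, M (k, i) (k, j)

/-- The map `E ⊗ id` acting on bipartite matrices. -/
def tensId {d d' : ℕ} (E : Matrix (Fin d) (Fin d) ℂ →ₗ[ℂ] Matrix (Fin d) (Fin d) ℂ)
    (M : Matrix (Fin d × Fin d') (Fin d × Fin d') ℂ) :
    Matrix (Fin d × Fin d') (Fin d × Fin d') ℂ :=
  Matrix.of fun p q => E (Matrix.of fun i k => M (i, p.2) (k, q.2)) p.1 q.1

/-- The square root of a positive semidefinite matrix (the definition Mathlib had in
December 2024, since removed from Mathlib). -/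
def Matrix.PosSemidef.sqrt {n 𝕜 : Type*} [Fintype n] [RCLike 𝕜] [DecidableEq n]
    {A : Matrix n n 𝕜} (hA : A.PosSemidef) : Matrix n n 𝕜 :=
  hA.1.eigenvectorUnitary.1 * diagonal ((↑) ∘ (√·) ∘ hA.1.eigenvalues) *
  (star hA.1.eigenvectorUnitary : Matrix n n 𝕜)

/-! Conjugation `M ↦ ρ̃^{1/2} M ρ̃^{1/2}` is linear and preserves positivity, so it carries the
optimal decomposition of `IR(B)` to one of `SR(ρ̃^{1/2} B ρ̃^{1/2})`; since `N` and `D` are POVMs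
for each setting, the images have reduced state `ρ̃^{1/2} ρ̃^{1/2} = ρ̃`. -/

namespace Matrix

section PosSemidef

variable {n 𝕜 : Type*} [Fintype n] [RCLike 𝕜] [DecidableEq n] {A : Matrix n n 𝕜}

open scoped MatrixOrder in
theorem PosSemidef.sqrt_eq_cfcSqrt (hA : A.PosSemidef) : hA.sqrt = CFC.sqrt A := by
  rw [CFC.sqrt_eq_real_sqrt A hA.nonneg, cfcₙ_eq_cfc, hA.1.cfc_eq]
  rfl

open scoped MatrixOrder in
theorem PosSemidef.posSemidef_sqrt (hA : A.PosSemidef) : hA.sqrt.PosSemidef :=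
  hA.sqrt_eq_cfcSqrt ▸ (CFC.sqrt_nonneg A).posSemidef

open scoped MatrixOrder in
theorem PosSemidef.sqrt_mul_self (hA : A.PosSemidef) : hA.sqrt * hA.sqrt = A := by
  rw [hA.sqrt_eq_cfcSqrt, CFC.sqrt_mul_sqrt_self A hA.nonneg]

end PosSemidef

theorem sum_mul_mul_of_sum_eq_one {ι n R : Type*} [Fintype ι] [Fintype n] [DecidableEq n]
    [Semiring R] {M : ι → Matrix n n R} (h : ∑ i, M i = 1) (S T : Matrix n n R) :
    ∑ i, S * M i * T = S * T := by
  rw [← Finset.sum_mul, ← Finset.mul_sum, h, mul_one]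

theorem PosSemidef.ofReal_re_trace {n : Type*} [Fintype n] {A : Matrix n n ℂ}
    (hA : A.PosSemidef) : ((A.trace.re : ℝ) : ℂ) = A.trace :=
  (Complex.eq_re_of_ofReal_le (r := 0) (by exact_mod_cast hA.trace_nonneg)).symm

theorem PosSemidef.conj_of_isHermitian {n : Type*} [Fintype n] {M S : Matrix n n ℂ}
    (hM : M.PosSemidef) (hS : S.IsHermitian) : (S * M * S).PosSemidef := by
  simpa [hS.eq] using hM.mul_mul_conjTranspose_same S

end Matrix

section Assemblages

variable {d na nx : ℕ}

/-- The fallback density `σ` is only needed for `A = 0`. -/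
theorem Matrix.PosSemidef.exists_isDensity_smul_eq {A σ : Matrix (Fin d) (Fin d) ℂ}
    (hA : A.PosSemidef) (hσ : IsDensity σ) :
    ∃ ρ, IsDensity ρ ∧ A = ((A.trace.re : ℝ) : ℂ) • ρ := by
  by_cases h : A.trace = 0
  · exact ⟨σ, hσ, by simp [hA.trace_eq_zero_iff.1 h]⟩
  have ht : ((A.trace.re : ℝ) : ℂ) ≠ 0 := hA.ofReal_re_trace ▸ h
  refine ⟨((A.trace.re : ℝ) : ℂ)⁻¹ • A, ⟨?_, ?_⟩, ?_⟩
  · rw [← Complex.ofReal_inv]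
    exact hA.smul (Complex.zero_le_real.2 (inv_nonneg.2 (Complex.nonneg_iff.1 hA.trace_nonneg).1))
  · rw [trace_smul, smul_eq_mul, hA.ofReal_re_trace, inv_mul_cancel₀ h]
  · rw [smul_smul, mul_inv_cancel₀ ht, one_smul]

theorem JM.sum_eq_one {D : Fin nx → Fin na → Matrix (Fin d) (Fin d) ℂ} (hD : JM D)
    (x : Fin nx) : ∑ a, D x a = 1 := by
  obtain ⟨nl, G, p, hG, -, hp1, hDeq⟩ := hD
  simp_rw [hDeq, Finset.sum_comm (γ := Fin na), ← Finset.sum_smul, ← Complex.ofReal_sum, hp1,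
    Complex.ofReal_one, one_smul, hG.2]

variable {S : Matrix (Fin d) (Fin d) ℂ}

theorem IsMA.isSA_conj {N : Fin nx → Fin na → Matrix (Fin d) (Fin d) ℂ} (hN : IsMA N)
    (hS : S.IsHermitian) (hSS : IsDensity (S * S)) : IsSA fun x a => S * N x a * S :=
  ⟨fun x a => (hN.1 x a).conj_of_isHermitian hS, S * S, hSS,
    fun x => sum_mul_mul_of_sum_eq_one (hN.2 x) S S⟩

/-- Each conjugated parent effect `S G_λ S` splits as the weight `q(λ) = tr (S G_λ S)` times a
density matrix; these weights sum to `tr (S S) = 1`. -/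
theorem JM.lhs_conj {D : Fin nx → Fin na → Matrix (Fin d) (Fin d) ℂ} (hD : JM D)
    (hS : S.IsHermitian) (hSS : IsDensity (S * S)) : LHS fun x a => S * D x a * S := by
  obtain ⟨nl, G, p, hG, hp0, hp1, hDeq⟩ := hD
  have hSGS l : (S * G l * S).PosSemidef := (hG.1 l).conj_of_isHermitian hS
  choose ρ hρ hSGS_eq using fun l => (hSGS l).exists_isDensity_smul_eq hSS
  refine ⟨nl, fun l => (S * G l * S).trace.re, p, ρ,
    fun l => (Complex.nonneg_iff.1 (hSGS l).trace_nonneg).1, ?_, hp0, hp1, hρ, fun x a => ?_⟩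
  · rw [← Complex.re_sum, ← trace_sum, sum_mul_mul_of_sum_eq_one hG.2, hSS.2, Complex.one_re]
  · simp only [hDeq, Finset.mul_sum, Finset.sum_mul, Matrix.mul_smul, Matrix.smul_mul]
    refine Finset.sum_congr rfl fun l _ => ?_
    conv_lhs => rw [hSGS_eq l]
    rw [smul_smul, Complex.ofReal_mul, mul_comm]

end Assemblages

theorem optimal_decomposition_consistent_marginal_general {d na nx : ℕ}
    (B : Fin nx → Fin na → Matrix (Fin d) (Fin d) ℂ)
    (ρ : Matrix (Fin d) (Fin d) ℂ) (hρ : ρ.PosDef) (hρ1 : ρ.trace = 1)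
    (hopt : SR (fun x a => hρ.posSemidef.sqrt * B x a * hρ.posSemidef.sqrt) = IR B)
    (hattain : ∃ N D, IsMA N ∧ JM D ∧
      ∀ x a, B x a + ((IR B : ℝ) : ℂ) • N x a = ((1 + IR B : ℝ) : ℂ) • D x a) :
    ∃ ξ τ : Fin nx → Fin na → Matrix (Fin d) (Fin d) ℂ,
      IsSA ξ ∧ LHS τ ∧
      (∀ x a, hρ.posSemidef.sqrt * B x a * hρ.posSemidef.sqrt +
          ((SR (fun x a => hρ.posSemidef.sqrt * B x a * hρ.posSemidef.sqrt) : ℝ) : ℂ) • ξ x a =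
        ((1 + SR (fun x a => hρ.posSemidef.sqrt * B x a * hρ.posSemidef.sqrt) : ℝ) : ℂ) • τ x a) ∧
      (∀ x, ∑ a, ξ x a = ρ) ∧ (∀ x, ∑ a, τ x a = ρ) := by
  obtain ⟨N, D, hN, hD, hdecomp⟩ := hattain
  set S := hρ.posSemidef.sqrt
  have hS : S.IsHermitian := hρ.posSemidef.posSemidef_sqrt.1
  have hSS : S * S = ρ := hρ.posSemidef.sqrt_mul_self
  have hdens : IsDensity (S * S) := hSS ▸ ⟨hρ.posSemidef, hρ1⟩
  refine ⟨fun x a => S * N x a * S, fun x a => S * D x a * S, hN.isSA_conj hS hdens,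
    hD.lhs_conj hS hdens, fun x a => ?_, fun x => ?_, fun x => ?_⟩
  · simpa [hopt, mul_add, add_mul] using congrArg (fun M => S * M * S) (hdecomp x a)
  · rw [sum_mul_mul_of_sum_eq_one (hN.2 x), hSS]
  · rw [sum_mul_mul_of_sum_eq_one (hD.sum_eq_one x), hSS]

/-- the optimal decomposition of SR(ρ̃^{1/2} B ρ̃^{1/2}) can be chosen
with both the noise and LHS assemblages having reduced state ρ̃. -/
theorem optimal_decomposition_consistent_marginal {d na nx : ℕ}
    (B : Fin nx → Fin na → Matrix (Fin d) (Fin d) ℂ) (hB : IsMA B)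
    (ρ : Matrix (Fin d) (Fin d) ℂ) (hρ : ρ.PosDef) (hρ1 : ρ.trace = 1)
    (hopt : SR (fun x a => hρ.posSemidef.sqrt * B x a * hρ.posSemidef.sqrt) = IR B)
    (hattain : ∃ N D, IsMA N ∧ JM D ∧
      ∀ x a, B x a + ((IR B : ℝ) : ℂ) • N x a = ((1 + IR B : ℝ) : ℂ) • D x a) :
    ∃ ξ τ : Fin nx → Fin na → Matrix (Fin d) (Fin d) ℂ,
      IsSA ξ ∧ LHS τ ∧
      (∀ x a, hρ.posSemidef.sqrt * B x a * hρ.posSemidef.sqrt +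
          ((SR (fun x a => hρ.posSemidef.sqrt * B x a * hρ.posSemidef.sqrt) : ℝ) : ℂ) • ξ x a =
        ((1 + SR (fun x a => hρ.posSemidef.sqrt * B x a * hρ.posSemidef.sqrt) : ℝ) : ℂ) • τ x a) ∧
      (∀ x, ∑ a, ξ x a = ρ) ∧ (∀ x, ∑ a, τ x a = ρ) :=
  optimal_decomposition_consistent_marginal_general B ρ hρ hρ1 hopt hattain
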